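/- Let U, V, W be real-valued random variables with a joint distribution. If for every α ∈ [0,1] the conditional α-quantile of U given (V,W) equals the conditional α-quantile of U given W alone, then U and V are conditionally independent given W. -/

import Mathlib

/-!
For a real probability measure with distribution function `F` and a level `0 < α < 1`, right
continuity of `F` makes the quantile a Galois partner of `F`: `quantile α ≤ t ↔ α ≤ F t`. So the
quantiles at rational levels determine `F` and hence the measure. The hypothesis holds almost
surely simultaneously at the countably many rational levels, which gives equality of the two
conditional distributions almost surely.
-/

open MeasureTheory ProbabilityTheory Set Filter
open scoped Topology

namespace StieltjesFunction

variable (f : StieltjesFunction ℝ) {α : ℝ}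

lemma le_apply_csInf (hne : {t | α ≤ f t}.Nonempty) : α ≤ f (sInf {t | α ≤ f t}) := by
  set s := sInf {t | α ≤ f t}
  refine ge_of_tendsto ((f.right_continuous s).mono Ioi_subset_Ici_self) ?_
  filter_upwards [self_mem_nhdsWithin] with t (hst : s < t)
  obtain ⟨u, hu, hut⟩ := exists_lt_of_csInf_lt hne hst
  exact hu.trans (f.mono hut.le)

lemma csInf_le_iff (hlow : ∃ t, f t < α) (hhigh : ∃ t, α ≤ f t) (t : ℝ) :
    sInf {s | α ≤ f s} ≤ t ↔ α ≤ f t := by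
  obtain ⟨t₀, ht₀⟩ := hlow
  have hbdd : BddBelow {s | α ≤ f s} :=
    ⟨t₀, fun s hs => le_of_lt <| f.mono.reflect_lt (ht₀.trans_le hs)⟩
  exact ⟨fun h => (f.le_apply_csInf hhigh).trans (f.mono h), fun h => csInf_le hbdd h⟩

end StieltjesFunction

namespace ProbabilityTheory

noncomputable def quantile (ν : Measure ℝ) (α : ℝ) : ℝ :=
  sInf {t | ENNReal.ofReal α ≤ ν (Iic t)}

variable {ν ν' : Measure ℝ} [IsProbabilityMeasure ν] [IsProbabilityMeasure ν']

lemma quantile_eq_sInf_cdf (α : ℝ) : quantile ν α = sInf {t | α ≤ cdf ν t} := by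
  simp only [quantile, ← ofReal_cdf, ENNReal.ofReal_le_ofReal_iff (cdf_nonneg ν _)]

lemma quantile_le_iff {α : ℝ} (hα₀ : 0 < α) (hα₁ : α < 1) (t : ℝ) :
    quantile ν α ≤ t ↔ α ≤ cdf ν t := by
  rw [quantile_eq_sInf_cdf]
  refine (cdf ν).csInf_le_iff ?_ ?_ t
  · exact ((tendsto_cdf_atBot ν).eventually_lt_const hα₀).exists
  · exact ((tendsto_cdf_atTop ν).eventually_const_le hα₁).exists

lemma cdf_le_of_quantile_eq (h : ∀ q : ℚ, 0 < (q : ℝ) → (q : ℝ) < 1 →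
    quantile ν q = quantile ν' q) (t : ℝ) : cdf ν t ≤ cdf ν' t := by
  refine le_of_forall_rat_lt_imp_le fun q hq => ?_
  rcases le_or_gt (q : ℝ) 0 with hq₀ | hq₀
  · exact hq₀.trans (cdf_nonneg ν' t)
  have hq₁ : (q : ℝ) < 1 := hq.trans_le (cdf_le_one ν t)
  rw [← quantile_le_iff hq₀ hq₁, ← h q hq₀ hq₁, quantile_le_iff hq₀ hq₁]
  exact hq.le

lemma eq_of_quantile_eq (h : ∀ q : ℚ, 0 < (q : ℝ) → (q : ℝ) < 1 →
    quantile ν q = quantile ν' q) : ν = ν' :=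
  Measure.eq_of_cdf ν ν' <| StieltjesFunction.ext fun t => le_antisymm
    (cdf_le_of_quantile_eq h t) (cdf_le_of_quantile_eq (fun q h₀ h₁ => (h q h₀ h₁).symm) t)

end ProbabilityTheory

theorem cond_quantile_eq_implies_cond_indep_general {Ω : Type*} [MeasurableSpace Ω]
    (μ : Measure Ω) [IsProbabilityMeasure μ]
    (U V W : Ω → ℝ)
    (hquant : ∀ α : ℝ, α ∈ Set.Icc (0:ℝ) 1 →
      ∀ᵐ ω ∂μ,
        sInf {t : ℝ | ENNReal.ofReal α ≤
            condDistrib U (fun ω => (V ω, W ω)) μ (V ω, W ω) (Set.Iic t)} =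
        sInf {t : ℝ | ENNReal.ofReal α ≤
            condDistrib U W μ (W ω) (Set.Iic t)}) :
    ∀ᵐ ω ∂μ,
      condDistrib U (fun ω => (V ω, W ω)) μ (V ω, W ω) =
        condDistrib U W μ (W ω) := by
  have hrat : ∀ᵐ ω ∂μ, ∀ q : ℚ, 0 < (q : ℝ) → (q : ℝ) < 1 →
      quantile (condDistrib U (fun ω => (V ω, W ω)) μ (V ω, W ω)) q =
        quantile (condDistrib U W μ (W ω)) q := by
    refine ae_all_iff.2 fun q => ?_
    by_cases hq : (q : ℝ) ∈ Icc 0 1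
    · filter_upwards [hquant q hq] with ω hω _ _ using hω
    · exact .of_forall fun _ h₀ h₁ => absurd ⟨h₀.le, h₁.le⟩ hq
  filter_upwards [hrat] with ω hω
  exact eq_of_quantile_eq hω

/-- If all conditional quantiles of `U` given `(V, W)` coincide (a.s.) with
those of `U` given `W` alone, for every level `α ∈ [0,1]`, then `U` and `V`
are conditionally independent given `W`, in the sense that the conditional
distribution of `U` given `(V, W)` equals that of `U` given `W` a.s. -/
theorem cond_quantile_eq_implies_cond_indep {Ω : Type*} [MeasurableSpace Ω]
    (μ : Measure Ω) [IsProbabilityMeasure μ]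
    (U V W : Ω → ℝ) (hU : Measurable U) (hV : Measurable V) (hW : Measurable W)
    (hquant : ∀ α : ℝ, α ∈ Set.Icc (0:ℝ) 1 →
      ∀ᵐ ω ∂μ,
        sInf {t : ℝ | ENNReal.ofReal α ≤
            condDistrib U (fun ω => (V ω, W ω)) μ (V ω, W ω) (Set.Iic t)} =
        sInf {t : ℝ | ENNReal.ofReal α ≤
            condDistrib U W μ (W ω) (Set.Iic t)}) :
    ∀ᵐ ω ∂μ,
      condDistrib U (fun ω => (V ω, W ω)) μ (V ω, W ω) =
        condDistrib U W μ (W ω) :=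
  cond_quantile_eq_implies_cond_indep_general μ U V W hquant
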